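/- For any tree T with threshold assignment τ (1≤τ(u)≤d(u) for all u), the minimum size of a timed target set is at least 2|A|, where A is the set of non-leaf nodes v with τ(v) strictly greater than the number of non-leaf neighbors of v. -/

import Mathlib

open Finset
open scoped Classical

variable {V : Type*}

noncomputable def Qseq (G : SimpleGraph V) [Fintype V] (τ : V → ℕ) (S : ℕ → Finset V) :
    ℕ → Finset V
  | 0 => ∅
  | i + 1 => Finset.univ.filter fun v =>
      τ v ≤ (G.neighborFinset v ∩ (S i ∪ Qseq G τ S i)).card

def IsTTS (G : SimpleGraph V) [Fintype V] (τ : V → ℕ) (S : ℕ → Finset V) (k : ℕ) : Prop :=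
  S k = ∅ ∧ Qseq G τ S k = Finset.univ

def ttsSize (S : ℕ → Finset V) (k : ℕ) : ℕ := ∑ i ∈ Finset.range (k + 1), (S i).card

noncomputable def strictMaj (G : SimpleGraph V) [Fintype V] (v : V) : ℕ := (G.degree v + 2) / 2

noncomputable def npStep (G : SimpleGraph V) [Fintype V] (τ : V → ℕ) (A : Finset V) : Finset V :=
  Finset.univ.filter fun v => τ v ≤ (G.neighborFinset v ∩ A).card

def IsTS (G : SimpleGraph V) [Fintype V] (τ : V → ℕ) (S : Finset V) : Prop :=
  ∃ i : ℕ, (npStep G τ)^[i] S = Finset.univ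

noncomputable def MTT (G : SimpleGraph V) [Fintype V] (τ : V → ℕ) : ℕ :=
  sInf {m | ∃ (S : ℕ → Finset V) (k : ℕ), IsTTS G τ S k ∧ ttsSize S k = m}

/-- The set of leaf neighbors of `v` (neighbors of degree 1). -/
noncomputable def leafNbrs (T : SimpleGraph V) [Fintype V] (v : V) : Finset V :=
  (T.neighborFinset v).filter fun u => T.degree u = 1

/-- `l̄(v)`: the number of non-leaf neighbors of `v` (neighbors of degree `> 1`). -/
noncomputable def lbar (T : SimpleGraph V) [Fintype V] (v : V) : ℕ :=
  ((T.neighborFinset v).filter fun u => 1 < T.degree u).card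

/-- The class `A` of non-leaf nodes `v` with `τ(v) > l̄(v)`. -/
noncomputable def Aset (T : SimpleGraph V) [Fintype V] (τ : V → ℕ) : Finset V :=
  Finset.univ.filter fun v => 1 < T.degree v ∧ lbar T v < τ v

/-- The class `A''` of non-leaf nodes `v` with `τ(v) > l̄(v)` and `τ(v) = d(v)`. -/
noncomputable def Aset'' (T : SimpleGraph V) [Fintype V] (τ : V → ℕ) : Finset V :=
  Finset.univ.filter fun v => 1 < T.degree v ∧ lbar T v < τ v ∧ τ v = T.degree v

/-- The class `C` of non-leaf nodes `v` with `τ(v) = l̄(v)`. -/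
noncomputable def Cset (T : SimpleGraph V) [Fintype V] (τ : V → ℕ) : Finset V :=
  Finset.univ.filter fun v => 1 < T.degree v ∧ τ v = lbar T v

/-!
Let `v ∈ A` and let `B(v) = {v} ∪ L(v)` be its star of leaves. Since `τ(v) > l̄(v)`, the node `v`
can only become active after one of its leaves is in `S ∪ Q` at the previous step, and a leaf can
only become active after `v` is. Hence activity inside `B(v)` never comes from outside, and
following these dependencies back in time shows that `v` together with a leaf can only be active
once at least two seeds have been placed in `B(v)`. The stars of distinct non-leaf nodes are
disjoint, so summing over `A` gives `2|A|` seeds.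
-/

noncomputable def leafStar (T : SimpleGraph V) [Fintype V] (v : V) : Finset V :=
  insert v (leafNbrs T v)

noncomputable def seedsBefore (S : ℕ → Finset V) (B : Finset V) (i : ℕ) : ℕ :=
  ∑ j ∈ range i, #(S j ∩ B)

lemma seedsBefore_succ {S : ℕ → Finset V} (B : Finset V) (i : ℕ) :
    seedsBefore S B (i + 1) = seedsBefore S B i + #(S i ∩ B) :=
  sum_range_succ _ i

lemma sum_seedsBefore_le_ttsSize {S : ℕ → Finset V} {ι : Type*} {A : Finset ι} {B : ι → Finset V}
    (hB : (A : Set ι).PairwiseDisjoint B) (k : ℕ) :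
    ∑ a ∈ A, seedsBefore S (B a) (k + 1) ≤ ttsSize S k := by
  simp only [ttsSize, seedsBefore]
  rw [sum_comm]
  refine sum_le_sum fun j _ => ?_
  rw [← card_biUnion (t := fun a => S j ∩ B a) (hB.mono_on fun a _ => inter_subset_right)]
  exact card_le_card (biUnion_subset.mpr fun a _ => inter_subset_left)

section TimedTargetSet

variable [Fintype V] {T : SimpleGraph V} {τ : V → ℕ} {S : ℕ → Finset V}

lemma mem_Qseq_succ {w : V} {i : ℕ} :
    w ∈ Qseq T τ S (i + 1) ↔ τ w ≤ #(T.neighborFinset w ∩ (S i ∪ Qseq T τ S i)) := by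
  simp [Qseq]

lemma notMem_Qseq_zero {w : V} : w ∉ Qseq T τ S 0 := by
  simp [Qseq]

lemma neighborFinset_eq_singleton_of_mem_leafNbrs {u v : V} (hu : u ∈ leafNbrs T v) :
    T.neighborFinset u = {v} := by
  obtain ⟨huv, hdeg⟩ := mem_filter.mp hu
  obtain ⟨a, ha⟩ := card_eq_one.mp ((T.card_neighborFinset_eq_degree u).trans hdeg)
  have hv : v ∈ T.neighborFinset u := by simpa using ((T.mem_neighborFinset v u).mp huv).symm
  rw [ha, mem_singleton] at hv
  rw [ha, hv]

lemma ne_of_mem_leafNbrs {u v : V} (hu : u ∈ leafNbrs T v) : u ≠ v :=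
  ((T.mem_neighborFinset v u).mp (mem_filter.mp hu).1).ne.symm

lemma card_leafNbrs_add_lbar (v : V) : #(leafNbrs T v) + lbar T v = T.degree v := by
  have hnonleaf : {u ∈ T.neighborFinset v | 1 < T.degree u} =
      {u ∈ T.neighborFinset v | ¬ T.degree u = 1} := by
    refine filter_congr fun u hu => ?_
    have := ((T.mem_neighborFinset v u).mp hu).degree_pos_right
    omega
  rw [leafNbrs, lbar, hnonleaf]
  convert card_filter_add_card_filter_not (s := T.neighborFinset v) (fun u => T.degree u = 1)
  exact (T.card_neighborFinset_eq_degree v).symm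

lemma leafNbrs_nonempty {v : V} (hτv : τ v ≤ T.degree v) (hv : lbar T v < τ v) :
    (leafNbrs T v).Nonempty := by
  have := card_leafNbrs_add_lbar (T := T) v
  rw [← card_pos]
  omega

lemma mem_of_leaf_mem_Qseq_succ {u v : V} (hτu : 1 ≤ τ u) (hu : u ∈ leafNbrs T v) {i : ℕ}
    (h : u ∈ Qseq T τ S (i + 1)) : v ∈ S i ∪ Qseq T τ S i := by
  rw [mem_Qseq_succ, neighborFinset_eq_singleton_of_mem_leafNbrs hu] at h
  by_contra hv
  rw [singleton_inter_of_notMem hv, card_empty] at h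
  omega

lemma exists_leaf_mem_of_mem_Qseq_succ {v : V} (hv : lbar T v < τ v) {i : ℕ}
    (h : v ∈ Qseq T τ S (i + 1)) : ∃ u ∈ leafNbrs T v, u ∈ S i ∪ Qseq T τ S i := by
  rw [mem_Qseq_succ] at h
  by_contra! hno
  have hsub : T.neighborFinset v ∩ (S i ∪ Qseq T τ S i) ⊆
      {u ∈ T.neighborFinset v | 1 < T.degree u} := by
    intro x hx
    obtain ⟨hxN, hxX⟩ := mem_inter.mp hx
    refine mem_filter.mpr ⟨hxN, ?_⟩
    have hpos := ((T.mem_neighborFinset v x).mp hxN).degree_pos_right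
    have hleaf : T.degree x ≠ 1 := fun h1 => hno x (mem_filter.mpr ⟨hxN, h1⟩) hxX
    omega
  have := card_le_card hsub
  rw [← lbar] at this
  omega

lemma one_le_seedsBefore {B : Finset V}
    (hB : ∀ x ∈ B, ∀ i, x ∈ Qseq T τ S (i + 1) → ∃ y ∈ B, y ∈ S i ∪ Qseq T τ S i) :
    ∀ i, ∀ x ∈ B, x ∈ Qseq T τ S i → 1 ≤ seedsBefore S B i := by
  intro i
  induction i with
  | zero => exact fun x _ hx => absurd hx notMem_Qseq_zero
  | succ i ih =>
    intro x hxB hx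
    obtain ⟨y, hyB, hy⟩ := hB x hxB i hx
    rw [seedsBefore_succ]
    rcases mem_union.mp hy with hyS | hyQ
    · have : 0 < #(S i ∩ B) := card_pos.mpr ⟨y, mem_inter.mpr ⟨hyS, hyB⟩⟩
      omega
    · exact le_add_right (ih y hyB hyQ)

lemma exists_mem_leafStar_of_mem_Qseq_succ (hτ : ∀ u, 1 ≤ τ u) {v : V} (hv : lbar T v < τ v) :
    ∀ x ∈ leafStar T v, ∀ i, x ∈ Qseq T τ S (i + 1) →
      ∃ y ∈ leafStar T v, y ∈ S i ∪ Qseq T τ S i := by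
  intro x hx i hxQ
  rcases mem_insert.mp hx with rfl | hxL
  · obtain ⟨u, hu, huX⟩ := exists_leaf_mem_of_mem_Qseq_succ hv hxQ
    exact ⟨u, mem_insert_of_mem hu, huX⟩
  · exact ⟨v, mem_insert_self v _, mem_of_leaf_mem_Qseq_succ (hτ x) hxL hxQ⟩

lemma two_le_seedsBefore (hτ : ∀ u, 1 ≤ τ u) {v : V} (hv : lbar T v < τ v) :
    ∀ i, ∀ u ∈ leafNbrs T v, v ∈ Qseq T τ S i → u ∈ Qseq T τ S i →
      2 ≤ seedsBefore S (leafStar T v) i := by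
  intro i
  induction i with
  | zero => exact fun _ _ hvQ => absurd hvQ notMem_Qseq_zero
  | succ i ih =>
    intro u hu hvQ huQ
    have hvX := mem_of_leaf_mem_Qseq_succ (hτ u) hu huQ
    obtain ⟨u', hu', hu'X⟩ := exists_leaf_mem_of_mem_Qseq_succ hv hvQ
    have hvB : v ∈ leafStar T v := mem_insert_self v _
    have hu'B : u' ∈ leafStar T v := mem_insert_of_mem hu'
    have hseeds := one_le_seedsBefore (exists_mem_leafStar_of_mem_Qseq_succ (S := S) hτ hv) i
    -- each of `v`, `u'` lying in `S i` is a seed at step `i`, one lying in `Q i` forces an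
    -- earlier seed, and if both lie in `Q i` we recurse
    rw [seedsBefore_succ]
    rcases mem_union.mp hvX with hvS | hvQ'
    · rcases mem_union.mp hu'X with hu'S | hu'Q
      · have hpair : {v, u'} ⊆ S i ∩ leafStar T v := by
          simp only [insert_subset_iff, singleton_subset_iff, mem_inter]
          exact ⟨⟨hvS, hvB⟩, hu'S, hu'B⟩
        have := card_le_card hpair
        rw [card_pair (ne_of_mem_leafNbrs hu').symm] at this
        omega
      · have : 0 < #(S i ∩ leafStar T v) := card_pos.mpr ⟨v, mem_inter.mpr ⟨hvS, hvB⟩⟩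
        have := hseeds u' hu'B hu'Q
        omega
    · rcases mem_union.mp hu'X with hu'S | hu'Q
      · have : 0 < #(S i ∩ leafStar T v) := card_pos.mpr ⟨u', mem_inter.mpr ⟨hu'S, hu'B⟩⟩
        have := hseeds v hvB hvQ'
        omega
      · exact le_add_right (ih u' hu' hvQ' hu'Q)

lemma disjoint_leafStar {v w : V} (hv : 1 < T.degree v) (hw : 1 < T.degree w) (hne : v ≠ w) :
    Disjoint (leafStar T v) (leafStar T w) := by
  rw [disjoint_left]
  intro x hxv hxw
  rcases mem_insert.mp hxv with rfl | hxv
  · rcases mem_insert.mp hxw with rfl | hxw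
    · exact hne rfl
    · have := (mem_filter.mp hxw).2
      omega
  · rcases mem_insert.mp hxw with rfl | hxw
    · have := (mem_filter.mp hxv).2
      omega
    · apply hne
      have := (neighborFinset_eq_singleton_of_mem_leafNbrs hxv).symm.trans
        (neighborFinset_eq_singleton_of_mem_leafNbrs hxw)
      exact singleton_injective this

end TimedTargetSet

theorem stmt13_general [Fintype V] (T : SimpleGraph V)
    (τ : V → ℕ)
    (hτ : ∀ u, 1 ≤ τ u ∧ τ u ≤ T.degree u)
    (S : ℕ → Finset V) (k : ℕ) (hS : IsTTS T τ S k) :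
    2 * (Aset T τ).card ≤ ttsSize S k := by
  have hstar : ∀ v ∈ Aset T τ, 2 ≤ seedsBefore S (leafStar T v) (k + 1) := by
    intro v hv
    obtain ⟨-, -, hlbar⟩ := mem_filter.mp hv
    obtain ⟨u, hu⟩ := leafNbrs_nonempty (hτ v).2 hlbar
    have hall : ∀ x, x ∈ Qseq T τ S k := fun x => hS.2 ▸ mem_univ x
    calc 2 ≤ seedsBefore S (leafStar T v) k :=
          two_le_seedsBefore (fun u => (hτ u).1) hlbar k u hu (hall v) (hall u)
      _ ≤ seedsBefore S (leafStar T v) (k + 1) := by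
          rw [seedsBefore_succ]
          exact Nat.le_add_right _ _
  have hdisj : (Aset T τ : Set V).PairwiseDisjoint (leafStar T) :=
    fun v hv w hw hne => disjoint_leafStar (mem_filter.mp hv).2.1 (mem_filter.mp hw).2.1 hne
  calc 2 * (Aset T τ).card = ∑ _v ∈ Aset T τ, 2 := by rw [sum_const, smul_eq_mul, mul_comm]
    _ ≤ ∑ v ∈ Aset T τ, seedsBefore S (leafStar T v) (k + 1) := sum_le_sum hstar
    _ ≤ ttsSize S k := sum_seedsBefore_le_ttsSize hdisj k

/-- Corollary 1: For any tree `T` (on at least 2 nodes) with thresholds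
`1 ≤ τ(u) ≤ d(u)`, every timed target set has size at least `2|A|`, where
`A = {v : d(v) > 1 and τ(v) > l̄(v)}`. -/
theorem stmt13 [Fintype V] (T : SimpleGraph V) (hT : T.IsTree)
    (hcard : 2 ≤ Fintype.card V) (τ : V → ℕ)
    (hτ : ∀ u, 1 ≤ τ u ∧ τ u ≤ T.degree u)
    (S : ℕ → Finset V) (k : ℕ) (hS : IsTTS T τ S k) :
    2 * (Aset T τ).card ≤ ttsSize S k :=
  stmt13_general T τ hτ S k hS
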